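/- Let v = (v₀, v₁, …, v₆) ∈ ℤ⁷. Then v is a (−1)-class for the Lorentzian form ⟨a,b⟩ = a₀b₀ − Σ_{i=1}^{6} aᵢbᵢ with κ = (−3,−1,…,−1) (that is, ⟨v,v⟩ = −1 and ⟨v,κ⟩ = −1) if and only if there is a permutation σ of the indices {1,…,6} such that (v₀, v_{σ(1)}, …, v_{σ(6)}) is one of the following three vectors: (0,−1,0,0,0,0,0) [exceptional curve], (1,1,1,0,0,0,0) [line through 2 points], (2,1,1,1,1,1,0) [conic through 5 points]. -/
import Mathlib

/-- The Lorentzian intersection form on the Picard lattice `ℤ^{r+1}` of a del Pezzo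
surface: `⟨a,b⟩ = a₀b₀ − Σ_{i=1}^{r} aᵢbᵢ`. -/
def lorentzForm {r : ℕ} (a b : Fin (r + 1) → ℤ) : ℤ :=
  a 0 * b 0 - ∑ i : Fin r, a i.succ * b i.succ

/-- The canonical class `κ = (−3,−1,…,−1)`. -/
def kappa {r : ℕ} : Fin (r + 1) → ℤ := Fin.cons (-3) fun _ => -1

private lemma hnn' (y : ℤ) : 0 ≤ y * (y + 1) := by
  rcases le_or_gt 0 y with h | h
  · exact mul_nonneg h (by linarith)
  · have h2 : 0 ≤ (-y) * (-(y+1)) := mul_nonneg (by linarith) (by linarith)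
    rw [neg_mul_neg] at h2; exact h2

private lemma hnn (y : ℤ) : 0 ≤ y * (y - 1) := by
  linarith [hnn' (y-1), show y*(y-1) = (y-1)*(y-1+1) from by ring]

private lemma finAux (v : Fin 7 → ℤ) (a0 a1 a2 a3 a4 a5 a6 : ℤ)
    (h0 : v 0 = a0) (h1 : v 1 = a1) (h2 : v 2 = a2) (h3 : v 3 = a3)
    (h4 : v 4 = a4) (h5 : v 5 = a5) (h6 : v 6 = a6)
    (hw : ∃ σ : Equiv.Perm (Fin 6),
      (Fin.cons a0 (fun j : Fin 6 => ![a0,a1,a2,a3,a4,a5,a6] (σ j).succ) : Fin 7 → ℤ) = ![0,-1,0,0,0,0,0] ∨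
      (Fin.cons a0 (fun j : Fin 6 => ![a0,a1,a2,a3,a4,a5,a6] (σ j).succ) : Fin 7 → ℤ) = ![1,1,1,0,0,0,0] ∨
      (Fin.cons a0 (fun j : Fin 6 => ![a0,a1,a2,a3,a4,a5,a6] (σ j).succ) : Fin 7 → ℤ) = ![2,1,1,1,1,1,0]) :
    ∃ σ : Equiv.Perm (Fin 6),
        (Fin.cons (v 0) (fun j : Fin 6 => v (σ j).succ) : Fin 7 → ℤ) ∈
          ({![0,-1,0,0,0,0,0], ![1,1,1,0,0,0,0], ![2,1,1,1,1,1,0]} :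
            Set (Fin 7 → ℤ)) := by
  have hv : v = ![a0,a1,a2,a3,a4,a5,a6] := by
    funext i
    fin_cases i <;> assumption
  obtain ⟨σ, hσ⟩ := hw
  refine ⟨σ, ?_⟩
  have he : (Fin.cons (v 0) (fun j : Fin 6 => v (σ j).succ) : Fin 7 → ℤ)
      = Fin.cons a0 (fun j : Fin 6 => ![a0,a1,a2,a3,a4,a5,a6] (σ j).succ) := by
    rw [hv]; rfl
  rw [he]
  rcases hσ with h | h | h <;> rw [h] <;> simp

private lemma backKey (v : Fin 7 → ℤ) (σ : Equiv.Perm (Fin 6)) (w : Fin 7 → ℤ)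
    (hw : (Fin.cons (v 0) (fun j : Fin 6 => v (σ j).succ) : Fin 7 → ℤ) = w) :
    lorentzForm v v = lorentzForm w w ∧ lorentzForm v kappa = lorentzForm w kappa := by
  have h0 : v 0 = w 0 := by
    have := congrFun hw 0; simpa using this
  have hs : ∀ j : Fin 6, v (σ j).succ = w j.succ := by
    intro j
    have := congrFun hw j.succ
    simpa [Fin.cons_succ] using this
  constructor
  · simp only [lorentzForm, h0]
    congr 1
    rw [← Equiv.sum_comp σ (fun i : Fin 6 => v i.succ * v i.succ)]
    exact Finset.sum_congr rfl fun i _ => by rw [hs i]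
  · simp only [lorentzForm, h0]
    congr 1
    rw [← Equiv.sum_comp σ (fun i : Fin 6 => v i.succ * kappa i.succ)]
    refine Finset.sum_congr rfl fun i _ => ?_
    rw [hs i]
    simp [kappa]

set_option maxHeartbeats 4000000 in
/-- A `(−1)`-class in `ℤ⁷` (the Picard lattice of a cubic surface, the del Pezzo
surface of degree 3) is, up to a permutation of the coordinates `1,…,6`, one of the
three listed vectors: the class of an exceptional curve, a line through 2 points,
or a conic through 5 points. -/
theorem minusOneClasses_deg3 (v : Fin 7 → ℤ) :
    (lorentzForm v v = -1 ∧ lorentzForm v kappa = -1) ↔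
      ∃ σ : Equiv.Perm (Fin 6),
        (Fin.cons (v 0) (fun j : Fin 6 => v (σ j).succ) : Fin 7 → ℤ) ∈
          ({![0,-1,0,0,0,0,0], ![1,1,1,0,0,0,0], ![2,1,1,1,1,1,0]} :
            Set (Fin 7 → ℤ)) := by
  constructor
  · rintro ⟨h1, h2⟩
    simp only [lorentzForm, kappa, Fin.sum_univ_six, Fin.cons_zero, Fin.cons_succ,
      show ((0:Fin 6).succ)=(1:Fin 7) from rfl, show ((1:Fin 6).succ)=(2:Fin 7) from rfl,
      show ((2:Fin 6).succ)=(3:Fin 7) from rfl, show ((3:Fin 6).succ)=(4:Fin 7) from rfl,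
      show ((4:Fin 6).succ)=(5:Fin 7) from rfl, show ((5:Fin 6).succ)=(6:Fin 7) from rfl] at h1 h2
    have hq : 3 * (v 0) * (v 0) ≤ 6 * (v 0) + 5 := by
      nlinarith [h1, h2, sq_nonneg (v 1 - v 2), sq_nonneg (v 1 - v 3), sq_nonneg (v 1 - v 4), sq_nonneg (v 1 - v 5), sq_nonneg (v 1 - v 6), sq_nonneg (v 2 - v 3), sq_nonneg (v 2 - v 4), sq_nonneg (v 2 - v 5), sq_nonneg (v 2 - v 6), sq_nonneg (v 3 - v 4), sq_nonneg (v 3 - v 5), sq_nonneg (v 3 - v 6), sq_nonneg (v 4 - v 5), sq_nonneg (v 4 - v 6), sq_nonneg (v 5 - v 6)]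
    have hlow : 0 ≤ v 0 := by nlinarith [hq]
    have hhigh : v 0 ≤ 2 := by nlinarith [hq]
    have hd : v 0 = 0 ∨ v 0 = 1 ∨ v 0 = 2 := by omega
    rcases hd with hd | hd | hd
    · rw [hd] at h1 h2
      have z : v 1 * (v 1 + 1) + v 2 * (v 2 + 1) + v 3 * (v 3 + 1) + v 4 * (v 4 + 1) + v 5 * (v 5 + 1) + v 6 * (v 6 + 1) = 0 := by linear_combination -h1 + h2
      have z1 : v 1 * (v 1 + 1) = 0 := by linarith [z, hnn' (v 1), hnn' (v 2), hnn' (v 3), hnn' (v 4), hnn' (v 5), hnn' (v 6)]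
      have c1 : v 1 = 0 ∨ v 1 = -1 := by rcases mul_eq_zero.mp z1 with h | h <;> omega
      have z2 : v 2 * (v 2 + 1) = 0 := by linarith [z, hnn' (v 1), hnn' (v 2), hnn' (v 3), hnn' (v 4), hnn' (v 5), hnn' (v 6)]
      have c2 : v 2 = 0 ∨ v 2 = -1 := by rcases mul_eq_zero.mp z2 with h | h <;> omega
      have z3 : v 3 * (v 3 + 1) = 0 := by linarith [z, hnn' (v 1), hnn' (v 2), hnn' (v 3), hnn' (v 4), hnn' (v 5), hnn' (v 6)]
      have c3 : v 3 = 0 ∨ v 3 = -1 := by rcases mul_eq_zero.mp z3 with h | h <;> omega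
      have z4 : v 4 * (v 4 + 1) = 0 := by linarith [z, hnn' (v 1), hnn' (v 2), hnn' (v 3), hnn' (v 4), hnn' (v 5), hnn' (v 6)]
      have c4 : v 4 = 0 ∨ v 4 = -1 := by rcases mul_eq_zero.mp z4 with h | h <;> omega
      have z5 : v 5 * (v 5 + 1) = 0 := by linarith [z, hnn' (v 1), hnn' (v 2), hnn' (v 3), hnn' (v 4), hnn' (v 5), hnn' (v 6)]
      have c5 : v 5 = 0 ∨ v 5 = -1 := by rcases mul_eq_zero.mp z5 with h | h <;> omega
      have z6 : v 6 * (v 6 + 1) = 0 := by linarith [z, hnn' (v 1), hnn' (v 2), hnn' (v 3), hnn' (v 4), hnn' (v 5), hnn' (v 6)]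
      have c6 : v 6 = 0 ∨ v 6 = -1 := by rcases mul_eq_zero.mp z6 with h | h <;> omega
      rcases c1 with a1 | a1 <;> rcases c2 with a2 | a2 <;> rcases c3 with a3 | a3 <;> rcases c4 with a4 | a4 <;> rcases c5 with a5 | a5 <;> rcases c6 with a6 | a6 <;>
        first
          | (exfalso; linarith)
          | exact finAux v 0 (-1) 0 0 0 0 0 hd a1 a2 a3 a4 a5 a6 ⟨Equiv.swap 0 0, Or.inl (by decide)⟩
          | exact finAux v 0 0 (-1) 0 0 0 0 hd a1 a2 a3 a4 a5 a6 ⟨Equiv.swap 0 1, Or.inl (by decide)⟩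
          | exact finAux v 0 0 0 (-1) 0 0 0 hd a1 a2 a3 a4 a5 a6 ⟨Equiv.swap 0 2, Or.inl (by decide)⟩
          | exact finAux v 0 0 0 0 (-1) 0 0 hd a1 a2 a3 a4 a5 a6 ⟨Equiv.swap 0 3, Or.inl (by decide)⟩
          | exact finAux v 0 0 0 0 0 (-1) 0 hd a1 a2 a3 a4 a5 a6 ⟨Equiv.swap 0 4, Or.inl (by decide)⟩
          | exact finAux v 0 0 0 0 0 0 (-1) hd a1 a2 a3 a4 a5 a6 ⟨Equiv.swap 0 5, Or.inl (by decide)⟩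
    · rw [hd] at h1 h2
      have z : v 1 * (v 1 - 1) + v 2 * (v 2 - 1) + v 3 * (v 3 - 1) + v 4 * (v 4 - 1) + v 5 * (v 5 - 1) + v 6 * (v 6 - 1) = 0 := by linear_combination -h1 - h2
      have z1 : v 1 * (v 1 - 1) = 0 := by linarith [z, hnn (v 1), hnn (v 2), hnn (v 3), hnn (v 4), hnn (v 5), hnn (v 6)]
      have c1 : v 1 = 0 ∨ v 1 = 1 := by rcases mul_eq_zero.mp z1 with h | h <;> omega
      have z2 : v 2 * (v 2 - 1) = 0 := by linarith [z, hnn (v 1), hnn (v 2), hnn (v 3), hnn (v 4), hnn (v 5), hnn (v 6)]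
      have c2 : v 2 = 0 ∨ v 2 = 1 := by rcases mul_eq_zero.mp z2 with h | h <;> omega
      have z3 : v 3 * (v 3 - 1) = 0 := by linarith [z, hnn (v 1), hnn (v 2), hnn (v 3), hnn (v 4), hnn (v 5), hnn (v 6)]
      have c3 : v 3 = 0 ∨ v 3 = 1 := by rcases mul_eq_zero.mp z3 with h | h <;> omega
      have z4 : v 4 * (v 4 - 1) = 0 := by linarith [z, hnn (v 1), hnn (v 2), hnn (v 3), hnn (v 4), hnn (v 5), hnn (v 6)]
      have c4 : v 4 = 0 ∨ v 4 = 1 := by rcases mul_eq_zero.mp z4 with h | h <;> omega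
      have z5 : v 5 * (v 5 - 1) = 0 := by linarith [z, hnn (v 1), hnn (v 2), hnn (v 3), hnn (v 4), hnn (v 5), hnn (v 6)]
      have c5 : v 5 = 0 ∨ v 5 = 1 := by rcases mul_eq_zero.mp z5 with h | h <;> omega
      have z6 : v 6 * (v 6 - 1) = 0 := by linarith [z, hnn (v 1), hnn (v 2), hnn (v 3), hnn (v 4), hnn (v 5), hnn (v 6)]
      have c6 : v 6 = 0 ∨ v 6 = 1 := by rcases mul_eq_zero.mp z6 with h | h <;> omega
      rcases c1 with a1 | a1 <;> rcases c2 with a2 | a2 <;> rcases c3 with a3 | a3 <;> rcases c4 with a4 | a4 <;> rcases c5 with a5 | a5 <;> rcases c6 with a6 | a6 <;>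
        first
          | (exfalso; linarith)
          | exact finAux v 1 1 1 0 0 0 0 hd a1 a2 a3 a4 a5 a6 ⟨Equiv.swap 0 0 * Equiv.swap 1 1, Or.inr (Or.inl (by decide))⟩
          | exact finAux v 1 1 0 1 0 0 0 hd a1 a2 a3 a4 a5 a6 ⟨Equiv.swap 0 0 * Equiv.swap 1 2, Or.inr (Or.inl (by decide))⟩
          | exact finAux v 1 1 0 0 1 0 0 hd a1 a2 a3 a4 a5 a6 ⟨Equiv.swap 0 0 * Equiv.swap 1 3, Or.inr (Or.inl (by decide))⟩
          | exact finAux v 1 1 0 0 0 1 0 hd a1 a2 a3 a4 a5 a6 ⟨Equiv.swap 0 0 * Equiv.swap 1 4, Or.inr (Or.inl (by decide))⟩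
          | exact finAux v 1 1 0 0 0 0 1 hd a1 a2 a3 a4 a5 a6 ⟨Equiv.swap 0 0 * Equiv.swap 1 5, Or.inr (Or.inl (by decide))⟩
          | exact finAux v 1 0 1 1 0 0 0 hd a1 a2 a3 a4 a5 a6 ⟨Equiv.swap 0 1 * Equiv.swap 1 2, Or.inr (Or.inl (by decide))⟩
          | exact finAux v 1 0 1 0 1 0 0 hd a1 a2 a3 a4 a5 a6 ⟨Equiv.swap 0 1 * Equiv.swap 1 3, Or.inr (Or.inl (by decide))⟩
          | exact finAux v 1 0 1 0 0 1 0 hd a1 a2 a3 a4 a5 a6 ⟨Equiv.swap 0 1 * Equiv.swap 1 4, Or.inr (Or.inl (by decide))⟩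
          | exact finAux v 1 0 1 0 0 0 1 hd a1 a2 a3 a4 a5 a6 ⟨Equiv.swap 0 1 * Equiv.swap 1 5, Or.inr (Or.inl (by decide))⟩
          | exact finAux v 1 0 0 1 1 0 0 hd a1 a2 a3 a4 a5 a6 ⟨Equiv.swap 0 2 * Equiv.swap 1 3, Or.inr (Or.inl (by decide))⟩
          | exact finAux v 1 0 0 1 0 1 0 hd a1 a2 a3 a4 a5 a6 ⟨Equiv.swap 0 2 * Equiv.swap 1 4, Or.inr (Or.inl (by decide))⟩
          | exact finAux v 1 0 0 1 0 0 1 hd a1 a2 a3 a4 a5 a6 ⟨Equiv.swap 0 2 * Equiv.swap 1 5, Or.inr (Or.inl (by decide))⟩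
          | exact finAux v 1 0 0 0 1 1 0 hd a1 a2 a3 a4 a5 a6 ⟨Equiv.swap 0 3 * Equiv.swap 1 4, Or.inr (Or.inl (by decide))⟩
          | exact finAux v 1 0 0 0 1 0 1 hd a1 a2 a3 a4 a5 a6 ⟨Equiv.swap 0 3 * Equiv.swap 1 5, Or.inr (Or.inl (by decide))⟩
          | exact finAux v 1 0 0 0 0 1 1 hd a1 a2 a3 a4 a5 a6 ⟨Equiv.swap 0 4 * Equiv.swap 1 5, Or.inr (Or.inl (by decide))⟩
    · rw [hd] at h1 h2
      have z : v 1 * (v 1 - 1) + v 2 * (v 2 - 1) + v 3 * (v 3 - 1) + v 4 * (v 4 - 1) + v 5 * (v 5 - 1) + v 6 * (v 6 - 1) = 0 := by linear_combination -h1 - h2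
      have z1 : v 1 * (v 1 - 1) = 0 := by linarith [z, hnn (v 1), hnn (v 2), hnn (v 3), hnn (v 4), hnn (v 5), hnn (v 6)]
      have c1 : v 1 = 0 ∨ v 1 = 1 := by rcases mul_eq_zero.mp z1 with h | h <;> omega
      have z2 : v 2 * (v 2 - 1) = 0 := by linarith [z, hnn (v 1), hnn (v 2), hnn (v 3), hnn (v 4), hnn (v 5), hnn (v 6)]
      have c2 : v 2 = 0 ∨ v 2 = 1 := by rcases mul_eq_zero.mp z2 with h | h <;> omega
      have z3 : v 3 * (v 3 - 1) = 0 := by linarith [z, hnn (v 1), hnn (v 2), hnn (v 3), hnn (v 4), hnn (v 5), hnn (v 6)]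
      have c3 : v 3 = 0 ∨ v 3 = 1 := by rcases mul_eq_zero.mp z3 with h | h <;> omega
      have z4 : v 4 * (v 4 - 1) = 0 := by linarith [z, hnn (v 1), hnn (v 2), hnn (v 3), hnn (v 4), hnn (v 5), hnn (v 6)]
      have c4 : v 4 = 0 ∨ v 4 = 1 := by rcases mul_eq_zero.mp z4 with h | h <;> omega
      have z5 : v 5 * (v 5 - 1) = 0 := by linarith [z, hnn (v 1), hnn (v 2), hnn (v 3), hnn (v 4), hnn (v 5), hnn (v 6)]
      have c5 : v 5 = 0 ∨ v 5 = 1 := by rcases mul_eq_zero.mp z5 with h | h <;> omega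
      have z6 : v 6 * (v 6 - 1) = 0 := by linarith [z, hnn (v 1), hnn (v 2), hnn (v 3), hnn (v 4), hnn (v 5), hnn (v 6)]
      have c6 : v 6 = 0 ∨ v 6 = 1 := by rcases mul_eq_zero.mp z6 with h | h <;> omega
      rcases c1 with a1 | a1 <;> rcases c2 with a2 | a2 <;> rcases c3 with a3 | a3 <;> rcases c4 with a4 | a4 <;> rcases c5 with a5 | a5 <;> rcases c6 with a6 | a6 <;>
        first
          | (exfalso; linarith)
          | exact finAux v 2 0 1 1 1 1 1 hd a1 a2 a3 a4 a5 a6 ⟨Equiv.swap 5 0, Or.inr (Or.inr (by decide))⟩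
          | exact finAux v 2 1 0 1 1 1 1 hd a1 a2 a3 a4 a5 a6 ⟨Equiv.swap 5 1, Or.inr (Or.inr (by decide))⟩
          | exact finAux v 2 1 1 0 1 1 1 hd a1 a2 a3 a4 a5 a6 ⟨Equiv.swap 5 2, Or.inr (Or.inr (by decide))⟩
          | exact finAux v 2 1 1 1 0 1 1 hd a1 a2 a3 a4 a5 a6 ⟨Equiv.swap 5 3, Or.inr (Or.inr (by decide))⟩
          | exact finAux v 2 1 1 1 1 0 1 hd a1 a2 a3 a4 a5 a6 ⟨Equiv.swap 5 4, Or.inr (Or.inr (by decide))⟩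
          | exact finAux v 2 1 1 1 1 1 0 hd a1 a2 a3 a4 a5 a6 ⟨Equiv.swap 5 5, Or.inr (Or.inr (by decide))⟩
  · rintro ⟨σ, hσ⟩
    simp only [Set.mem_insert_iff, Set.mem_singleton_iff] at hσ
    rcases hσ with h | h | h <;>
      obtain ⟨e1, e2⟩ := backKey v σ _ h <;> rw [e1, e2] <;> exact ⟨by decide, by decide⟩
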